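/- arXiv:1501.02650 — 2 statements merged into one kernel-verified Lean document; each statement's English description precedes it below -/
import Mathlib

section
/- If G is a periodic group variety, m ≥ 0, and N is a nil-variety of semigroups, then m(G ∨ C_m ∨ N) = m. -/
/-!
Formalization framework: semigroup varieties as Galois-closed equational theories
over the free semigroup on countably many letters.  A variety is represented by
its equational theory; the order `V ≤ W` ("V is a subvariety of W") is reverse
inclusion of theories.  `Com` is the lattice of commutative semigroup varieties,
realized as the subtype of varieties whose theory contains the commutative law.
-/

open FreeSemigroup

/-- Words: elements of the free semigroup over a countably infinite alphabet. -/
abbrev Word : Type := FreeSemigroup ℕ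

/-- A semigroup identity `u = v`. -/
abbrev SgId : Type := Word × Word

/-- `spow a n = a ^ (n + 1)` in any (multiplicative) semigroup. -/
def spow {M : Type*} [Mul M] (a : M) : ℕ → M
  | 0 => a
  | n + 1 => a * spow a n

/-- A semigroup `S` satisfies the identity `e.1 = e.2`. -/
def SatS (S : Type) [Semigroup S] (e : SgId) : Prop :=
  ∀ σ : ℕ → S, FreeSemigroup.lift σ e.1 = FreeSemigroup.lift σ e.2

/-- `S` is a model of the set of identities `E`. -/
def Models (S : Type) [Semigroup S] (E : Set SgId) : Prop :=
  ∀ e ∈ E, SatS S e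

/-- The equational theory generated by `E`: all identities holding in every
model of `E` (by Birkhoff's theorem this is exactly deductive closure). -/
def eqTh (E : Set SgId) : Set SgId :=
  { e | ∀ (S : Type) [Semigroup S], Models S E → SatS S e }

theorem subset_eqTh (E : Set SgId) : E ⊆ eqTh E := by
  intro e he S _ hS
  exact hS e he

theorem eqTh_mono {E F : Set SgId} (h : E ⊆ F) : eqTh E ⊆ eqTh F := by
  intro e he S _ hS
  exact he S fun e' he' => hS e' (h he')

theorem eqTh_idem (E : Set SgId) : eqTh (eqTh E) = eqTh E := by
  refine Set.Subset.antisymm ?_ (subset_eqTh _)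
  intro e he S _ hS
  exact he S fun e' he' => he' S hS

/-- A semigroup variety, given by its (Galois-closed) equational theory. -/
structure SgVariety where
  th : Set SgId
  closed : eqTh th = th

theorem SgVariety.ext' {V W : SgVariety} (h : V.th = W.th) : V = W := by
  cases V; cases W; cases h; rfl

/-- The variety defined by a set of identities. -/
def varOf (E : Set SgId) : SgVariety :=
  ⟨eqTh E, eqTh_idem E⟩

/-- `V ≤ W` iff `V` is a subvariety of `W`, i.e. the theory of `W` is contained
in the theory of `V`. -/
instance : PartialOrder SgVariety where
  le V W := W.th ⊆ V.th
  le_refl V := Set.Subset.refl _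
  le_trans a b c h1 h2 := Set.Subset.trans h2 h1
  le_antisymm a b h1 h2 := SgVariety.ext' (Set.Subset.antisymm h2 h1)

/-- The lattice **SEM** of all semigroup varieties: join is intersection of
theories; meet is the variety defined by the union of the theories. -/
instance : Lattice SgVariety :=
  { (inferInstance : PartialOrder SgVariety) with
    sup := fun V W =>
      ⟨V.th ∩ W.th, by
        refine Set.Subset.antisymm (Set.subset_inter ?_ ?_) (subset_eqTh _)
        · exact (eqTh_mono Set.inter_subset_left).trans (le_of_eq V.closed)
        · exact (eqTh_mono Set.inter_subset_right).trans (le_of_eq W.closed)⟩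
    le_sup_left := fun V W => Set.inter_subset_left
    le_sup_right := fun V W => Set.inter_subset_right
    sup_le := fun V W U h1 h2 => Set.subset_inter h1 h2
    inf := fun V W => varOf (V.th ∪ W.th)
    inf_le_left := fun V W => Set.subset_union_left.trans (subset_eqTh _)
    inf_le_right := fun V W => Set.subset_union_right.trans (subset_eqTh _)
    le_inf := fun U V W h1 h2 =>
      (eqTh_mono (Set.union_subset h1 h2)).trans (le_of_eq U.closed) }

/-- The letters `x`, `y`, `z`. -/
def xw : Word := FreeSemigroup.of 0
def yw : Word := FreeSemigroup.of 1
def zw : Word := FreeSemigroup.of 2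

/-- The commutative law `xy = yx`. -/
def commId : SgId := (xw * yw, yw * xw)

/-- The lattice **Com**: commutative semigroup varieties. -/
abbrev ComVariety : Type := { V : SgVariety // commId ∈ V.th }

instance : Lattice ComVariety :=
  { (inferInstance : PartialOrder ComVariety) with
    sup := fun V W => ⟨V.1 ⊔ W.1, ⟨V.2, W.2⟩⟩
    le_sup_left := fun V W => @le_sup_left SgVariety _ V.1 W.1
    le_sup_right := fun V W => @le_sup_right SgVariety _ V.1 W.1
    sup_le := fun V W U h1 h2 => @sup_le SgVariety _ V.1 W.1 U.1 h1 h2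
    inf := fun V W => ⟨V.1 ⊓ W.1, subset_eqTh _ (Set.mem_union_left _ V.2)⟩
    inf_le_left := fun V W => @inf_le_left SgVariety _ V.1 W.1
    inf_le_right := fun V W => @inf_le_right SgVariety _ V.1 W.1
    le_inf := fun U V W h1 h2 => @le_inf SgVariety _ U.1 V.1 W.1 h1 h2 }

/-- The trivial variety `T`. -/
def trivialVar : SgVariety := varOf Set.univ

/-- The variety `COM` of all commutative semigroups. -/
def COMvar : SgVariety := varOf {commId}

/-- The variety `SL` of semilattices. -/
def SLvar : SgVariety := varOf {commId, (xw * xw, xw)}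

/-- `C_m = var{xᵐ = xᵐ⁺¹, xy = yx}` for `m ≥ 1`, and `C_0 = T`. -/
def Cvar : ℕ → SgVariety
  | 0 => trivialVar
  | m + 1 => varOf {commId, (spow xw m, spow xw (m + 1))}

def Tcom : ComVariety := ⟨trivialVar, subset_eqTh _ (Set.mem_univ _)⟩
def COMcom : ComVariety := ⟨COMvar, subset_eqTh _ rfl⟩
def SLcom : ComVariety := ⟨SLvar, subset_eqTh _ (Set.mem_insert _ _)⟩
def Ccom (m : ℕ) : ComVariety :=
  ⟨Cvar m, by
    cases m with
    | zero => exact subset_eqTh _ (Set.mem_univ _)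
    | succ m => exact subset_eqTh _ (Set.mem_insert _ _)⟩

/-- A semigroup (nonempty, with the given multiplication) is a group. -/
def IsGroupS (S : Type) [Semigroup S] : Prop :=
  ∃ e : S, (∀ a : S, e * a = a ∧ a * e = a) ∧ ∀ a : S, ∃ b : S, a * b = e ∧ b * a = e

/-- A nilsemigroup: there is a zero element and some power of every element is zero. -/
def IsNilS (S : Type) [Semigroup S] : Prop :=
  ∃ z : S, (∀ a : S, z * a = z ∧ a * z = z) ∧ ∀ a : S, ∃ n : ℕ, spow a n = z

/-- A group variety: all its (nonempty) members are groups. -/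
def IsGroupVariety (V : SgVariety) : Prop :=
  ∀ (S : Type) [Semigroup S], Nonempty S → Models S V.th → IsGroupS S

/-- A nil-variety: all its (nonempty) members are nilsemigroups. -/
def IsNilVariety (V : SgVariety) : Prop :=
  ∀ (S : Type) [Semigroup S], Nonempty S → Models S V.th → IsNilS S

/-- A combinatorial variety: all groups in it are singletons. -/
def IsCombinatorial (V : SgVariety) : Prop :=
  ∀ (S : Type) [Semigroup S], Models S V.th → IsGroupS S → Subsingleton S

/-- A periodic variety: satisfies `xⁿ = xⁿ⁺ᵏ` for some `n, k ≥ 1`. -/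
def IsPeriodic (V : SgVariety) : Prop :=
  ∃ n k : ℕ, (spow xw n, spow xw (n + k + 1)) ∈ V.th

/-- The letter `k` occurs in the word `w`. -/
def occursIn (k : ℕ) (w : Word) : Prop := k = w.head ∨ k ∈ w.tail

/-- `S` satisfies the identity `w = 0` (i.e. the system `wx = xw = w`, `x` fresh):
every value of `w` in `S` is a (two-sided) zero element. -/
def SatZeroS (S : Type) [Semigroup S] (w : Word) : Prop :=
  ∀ (σ : ℕ → S) (a : S),
    FreeSemigroup.lift σ w * a = FreeSemigroup.lift σ w ∧
      a * FreeSemigroup.lift σ w = FreeSemigroup.lift σ w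

/-- The variety `V` satisfies the identity `w = 0`. -/
def VSatZero (V : SgVariety) (w : Word) : Prop :=
  ∀ (S : Type) [Semigroup S], Models S V.th → SatZeroS S w

/-- The words `x²`, `x³`, `x²y`, `xy²`, `x²yz`. -/
def w_xx : Word := xw * xw
def w_xxx : Word := xw * xw * xw
def w_xxy : Word := xw * xw * yw
def w_xyy : Word := xw * yw * yw
def w_xxyz : Word := xw * xw * yw * zw

/-- The identity `x²y = xy²`. -/
def idQ : SgId := (w_xxy, w_xyy)

/-- The pair of identities expressing `w = 0`, with `k` a fresh letter. -/
def zeroPair (w : Word) (k : ℕ) : Set SgId :=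
  {(w * FreeSemigroup.of k, w), (FreeSemigroup.of k * w, w)}

/-- `xprodTo n = x₁x₂⋯xₙ` (for `n ≥ 1`), on the letters `0, …, n-1`. -/
def xprodTo : ℕ → Word
  | 0 => FreeSemigroup.of 0
  | 1 => FreeSemigroup.of 0
  | n + 2 => xprodTo (n + 1) * FreeSemigroup.of (n + 1)

/-- `I = var{x²y = xy², x²yz = 0, xy = yx}`. -/
def Ivar : SgVariety := varOf ({commId, idQ} ∪ zeroPair w_xxyz 3)

/-- `K = var{x²y = 0, xy = yx}`. -/
def Kvar : SgVariety := varOf ({commId} ∪ zeroPair w_xxy 2)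

/-- `L = var{x² = 0, xy = yx}`. -/
def Lvar : SgVariety := varOf ({commId} ∪ zeroPair w_xx 1)

/-- `I_n = var{x²yz = x₁⋯xₙ = 0, x²y = xy², xy = yx}`. -/
def Ivarn (n : ℕ) : SgVariety :=
  varOf ({commId, idQ} ∪ zeroPair w_xxyz 3 ∪ zeroPair (xprodTo n) n)

/-- `J = var{x²yz = x³ = 0, x²y = xy², xy = yx}`. -/
def Jvar : SgVariety := varOf ({commId, idQ} ∪ zeroPair w_xxyz 3 ∪ zeroPair w_xxx 1)

/-- `J_n = var{x²yz = x³ = x₁⋯xₙ = 0, x²y = xy², xy = yx}`. -/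
def Jvarn (n : ℕ) : SgVariety :=
  varOf ({commId, idQ} ∪ zeroPair w_xxyz 3 ∪ zeroPair w_xxx 1 ∪ zeroPair (xprodTo n) n)

/-- `K_n = var{x²y = x₁⋯xₙ = 0, xy = yx}`. -/
def Kvarn (n : ℕ) : SgVariety :=
  varOf ({commId} ∪ zeroPair w_xxy 2 ∪ zeroPair (xprodTo n) n)

/-- `L_n = var{x² = x₁⋯xₙ = 0, xy = yx}`. -/
def Lvarn (n : ℕ) : SgVariety :=
  varOf ({commId} ∪ zeroPair w_xx 1 ∪ zeroPair (xprodTo n) n)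

/-- Generators of `ZR(U)`: the commutative law together with all 0-reduced
identities (in the form of the corresponding identity pairs) holding in `U`. -/
def ZRgen (U : SgVariety) : Set SgId :=
  {commId} ∪ { e : SgId | ∃ (w : Word) (k : ℕ), ¬ occursIn k w ∧ VSatZero U w ∧
      (e = (w * FreeSemigroup.of k, w) ∨ e = (FreeSemigroup.of k * w, w)) }

/-- `ZR(U)`: the variety given by the commutative law and all 0-reduced
identities holding in `U`. -/
def ZRvar (U : SgVariety) : SgVariety := varOf (ZRgen U)

def Icom : ComVariety := ⟨Ivar, subset_eqTh _ (Set.mem_union_left _ (Set.mem_insert _ _))⟩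

def ZRcom (U : SgVariety) : ComVariety :=
  ⟨ZRvar U, subset_eqTh _ (Set.mem_union_left _ rfl)⟩

/-- All nilsemigroups in `V` are nilpotent of degree ≤ n, i.e. satisfy `x₁⋯xₙ = 0`. -/
def HasDegLe (V : SgVariety) (n : ℕ) : Prop :=
  ∀ (S : Type) [Semigroup S], Nonempty S → Models S V.th → IsNilS S → SatZeroS S (xprodTo n)

/-- `deg V = d` (with `d = ⊤` meaning infinite degree). -/
def DegIs (V : SgVariety) (d : ℕ∞) : Prop :=
  (∃ n : ℕ, 0 < n ∧ d = (n : ℕ∞) ∧ IsLeast {m : ℕ | 0 < m ∧ HasDegLe V m} n) ∨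
    (d = ⊤ ∧ ∀ n : ℕ, 0 < n → ¬ HasDegLe V n)

/-- Upper-modular element of a lattice. -/
def IsUpperModular {L : Type*} [Lattice L] (a : L) : Prop :=
  ∀ b c : L, b ≤ a → a ⊓ (b ⊔ c) = b ⊔ (a ⊓ c)

/-- Codistributive element of a lattice. -/
def IsCodistributive {L : Type*} [Lattice L] (a : L) : Prop :=
  ∀ b c : L, a ⊓ (b ⊔ c) = (a ⊓ b) ⊔ (a ⊓ c)

/-- Costandard element of a lattice. -/
def IsCostandard {L : Type*} [Lattice L] (a : L) : Prop :=
  ∀ b c : L, (a ⊓ b) ⊔ c = (a ⊔ c) ⊓ (b ⊔ c)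

/-- Modular element of a lattice. -/
def IsModularElt {L : Type*} [Lattice L] (a : L) : Prop :=
  ∀ b c : L, b ≤ c → (a ⊔ b) ⊓ c = (a ⊓ c) ⊔ b

/-- Neutral element of a lattice, via the median characterization
(equivalent to: every triple containing `a` generates a distributive
sublattice; Grätzer, "Lattice Theory: Foundation", Theorem 254). -/
def IsNeutralElt {L : Type*} [Lattice L] (a : L) : Prop :=
  ∀ b c : L, (a ⊓ b) ⊔ (b ⊓ c) ⊔ (c ⊓ a) = (a ⊔ b) ⊓ (b ⊔ c) ⊓ (c ⊔ a)


/-!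
The identity `xᵐ yⁿ⁺¹ = xᵐ⁺ᵖ yⁿ⁺¹` holds in `G` when `xᵖ` is the identity of every group in `G`,
in `C_m` because `xᵐ` is stable there, and in `N` once `yⁿ⁺¹` is a zero; a single `n` serves all of
`N` because it can be read off the relatively free semigroup of `N`. The identity fails in `C_k` for
every `k > m`: in `{0, …, k}` with addition truncated at `k`, take `x = 1` and `y = 0`.
-/

section Spow

variable {M : Type*} [Semigroup M]

theorem spow_add_add_one (a : M) (i j : ℕ) : spow a (i + j + 1) = spow a i * spow a j := by
  induction i with
  | zero => rw [Nat.zero_add]; rfl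
  | succ i ih =>
    rw [Nat.add_right_comm i 1 j]
    change a * spow a (i + j + 1) = a * spow a i * spow a j
    rw [ih, mul_assoc]

theorem spow_add_eq_of_spow_succ_eq {a : M} {p : ℕ} (h : spow a p = spow a (p + 1)) (j : ℕ) :
    spow a (p + j) = spow a p := by
  induction j with
  | zero => rfl
  | succ j ih => exact (congrArg (a * ·) ih).trans h.symm

theorem iterate_mul_left_succ (a t : M) (n : ℕ) : (a * ·)^[n + 1] t = spow a n * t := by
  induction n with
  | zero => rfl
  | succ n ih =>
    rw [Function.iterate_succ_apply', ih]
    exact (mul_assoc a (spow a n) t).symm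

theorem map_spow {S : Type*} [Mul S] (f : M →ₙ* S) (a : M) (n : ℕ) :
    f (spow a n) = spow (f a) n := by
  induction n with
  | zero => rfl
  | succ n ih => exact (map_mul f a _).trans (congrArg (f a * ·) ih)

theorem map_iterate_mul_left {S : Type*} [Mul S] (f : M →ₙ* S) (a t : M) (n : ℕ) :
    f ((a * ·)^[n] t) = (f a * ·)^[n] (f t) :=
  Function.Semiconj.iterate_right (fun x => map_mul f a x) n t

theorem map_lift {S : Type*} [Semigroup S] (f : M →ₙ* S) (τ : ℕ → M) (w : Word) :
    f (lift τ w) = lift (f ∘ τ) w :=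
  DFunLike.congr_fun (hom_ext (f := f.comp (lift τ)) (g := lift (f ∘ τ)) rfl) w

end Spow

theorem IsGroupS.iterate_mul_left_eq_self {S : Type} [Semigroup S] (hS : IsGroupS S) {a : S}
    {p k : ℕ} (h : spow a p = spow a (p + k + 1)) (t : S) : (a * ·)^[k + 1] t = t := by
  obtain ⟨e, he, hinv⟩ := hS
  obtain ⟨b, -, hb⟩ := hinv (spow a p)
  have hk : spow a k = e :=
    calc spow a k = b * spow a p * spow a k := by rw [hb, (he _).1]
      _ = e := by rw [mul_assoc, ← spow_add_add_one, ← h, hb]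
  rw [iterate_mul_left_succ, hk, (he t).1]

theorem models_varOf {S : Type} [Semigroup S] {E : Set SgId} (h : Models S E) :
    Models S (varOf E).th :=
  fun _ he => he S h

namespace SgVariety

variable (V : SgVariety)

theorem mem_th_iff {e : SgId} : e ∈ V.th ↔ ∀ (S : Type) [Semigroup S], Models S V.th → SatS S e :=
  ⟨fun he _ _ hS => hS _ he, fun h => V.closed ▸ h⟩

variable {V}

theorem lift_mem_th {u v : Word} (h : (u, v) ∈ V.th) (τ : ℕ → Word) :
    (lift τ u, lift τ v) ∈ V.th := by
  refine V.mem_th_iff.2 fun S _ hS σ => ?_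
  change lift σ (lift τ u) = lift σ (lift τ v)
  rw [map_lift, map_lift]
  exact V.mem_th_iff.1 h S hS _

theorem spow_eq_of_mem_th {p q : ℕ} (h : (spow xw p, spow xw q) ∈ V.th) {S : Type} [Semigroup S]
    (hS : Models S V.th) (a : S) : spow a p = spow a q := by
  simpa only [map_spow, xw, lift_of] using hS _ h fun _ => a

theorem mul_spow_eq_of_mem_th {n : ℕ} (h : (yw * spow xw n, spow xw n) ∈ V.th) {S : Type}
    [Semigroup S] (hS : Models S V.th) (b c : S) : c * spow b n = spow b n := by
  simpa only [map_mul, map_spow, xw, yw, lift_of, one_ne_zero, ↓reduceIte] using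
    hS _ h fun i => if i = 0 then b else c

variable (V)

def thCon : Con Word where
  r u v := (u, v) ∈ V.th
  iseqv :=
    { refl := fun _ => V.mem_th_iff.2 fun _ _ _ _ => rfl
      symm := fun h => V.mem_th_iff.2 fun S _ hS σ => (V.mem_th_iff.1 h S hS σ).symm
      trans := fun h₁ h₂ => V.mem_th_iff.2 fun S _ hS σ =>
        (V.mem_th_iff.1 h₁ S hS σ).trans (V.mem_th_iff.1 h₂ S hS σ) }
  mul' {u u' v v'} h₁ h₂ := V.mem_th_iff.2 fun S _ hS σ => by
    change lift σ (u * v) = lift σ (u' * v')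
    rw [map_mul, map_mul, V.mem_th_iff.1 h₁ S hS σ, V.mem_th_iff.1 h₂ S hS σ]

abbrev Free : Type := V.thCon.Quotient

def toFree : Word →ₙ* V.Free where
  toFun w := w
  map_mul' _ _ := rfl

theorem toFree_eq_toFree {u v : Word} : V.toFree u = V.toFree v ↔ (u, v) ∈ V.th :=
  Con.eq _

theorem models_free : Models V.Free V.th := by
  rintro ⟨u, v⟩ he σ
  choose τ hτ using fun i => Quotient.exists_rep (σ i)
  obtain rfl : V.toFree ∘ τ = σ := funext hτ
  change lift (V.toFree ∘ τ) u = lift (V.toFree ∘ τ) v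
  rw [← map_lift, ← map_lift, toFree_eq_toFree]
  exact lift_mem_th he τ

end SgVariety

theorem IsNilVariety.exists_mul_spow_mem_th {N : SgVariety} (hN : IsNilVariety N) :
    ∃ n, (yw * spow xw n, spow xw n) ∈ N.th := by
  obtain ⟨z, hz, hnil⟩ := hN N.Free ⟨N.toFree xw⟩ N.models_free
  obtain ⟨n, hn⟩ := hnil (N.toFree xw)
  refine ⟨n, N.toFree_eq_toFree.1 ?_⟩
  rw [map_mul, map_spow, hn]
  exact (hz _).2

/-- `xᵐ yⁿ⁺¹ = xᵐ⁺ʲ yⁿ⁺¹`, where `x⁰ yⁿ⁺¹` is `yⁿ⁺¹`. -/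
def xyPowId (m j n : ℕ) : SgId :=
  ((xw * ·)^[m] (spow yw n), (xw * ·)^[m + j] (spow yw n))

theorem satS_xyPowId_iff {S : Type} [Semigroup S] {m j n : ℕ} :
    SatS S (xyPowId m j n) ↔
      ∀ a b : S, (a * ·)^[m] (spow b n) = (a * ·)^[m + j] (spow b n) := by
  simp only [SatS, xyPowId, map_iterate_mul_left, map_spow, xw, yw, lift_of]
  exact ⟨fun h a b => h fun i => if i = 0 then a else b, fun h σ => h _ _⟩

theorem xyPowId_mem_th_of_isGroupVariety {G : SgVariety} (hG : IsGroupVariety G) {p k : ℕ}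
    (hper : (spow xw p, spow xw (p + k + 1)) ∈ G.th) (m n : ℕ) :
    xyPowId m (k + 1) n ∈ G.th := by
  refine G.mem_th_iff.2 fun S _ hS => satS_xyPowId_iff.2 fun a b => ?_
  rw [Function.iterate_add_apply, (hG S ⟨a⟩ hS).iterate_mul_left_eq_self
    (G.spow_eq_of_mem_th hper hS a)]

theorem xyPowId_mem_th_Cvar (m j n : ℕ) : xyPowId m j n ∈ (Cvar m).th := by
  cases m with
  | zero => exact subset_eqTh _ (Set.mem_univ _)
  | succ m =>
    have hgen : (spow xw m, spow xw (m + 1)) ∈ (Cvar (m + 1)).th :=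
      subset_eqTh _ (Set.mem_insert_of_mem _ rfl)
    refine (Cvar (m + 1)).mem_th_iff.2 fun S _ hS => satS_xyPowId_iff.2 fun a b => ?_
    rw [Nat.add_right_comm, iterate_mul_left_succ, iterate_mul_left_succ,
      spow_add_eq_of_spow_succ_eq ((Cvar (m + 1)).spow_eq_of_mem_th hgen hS a)]

theorem xyPowId_mem_th_of_mul_spow_mem_th {N : SgVariety} {n : ℕ}
    (h : (yw * spow xw n, spow xw n) ∈ N.th) (m j : ℕ) : xyPowId m j n ∈ N.th := by
  refine N.mem_th_iff.2 fun S _ hS => satS_xyPowId_iff.2 fun a b => ?_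
  have hzero : a * spow b n = spow b n := N.mul_spow_eq_of_mem_th h hS b a
  rw [Function.iterate_fixed hzero, Function.iterate_fixed hzero]

def TruncNat (K : ℕ) : Type := {a : ℕ // a ≤ K}

namespace TruncNat

variable {K : ℕ}

instance : CommSemigroup (TruncNat K) where
  mul a b := ⟨min (a.1 + b.1) K, min_le_right _ _⟩
  mul_assoc a b c := Subtype.ext (by change min (min _ K + _) K = min (_ + min _ K) K; omega)
  mul_comm a b := Subtype.ext (by change min _ K = min _ K; omega)

theorem val_mul (a b : TruncNat K) : (a * b).1 = min (a.1 + b.1) K := rfl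

theorem val_spow (a : TruncNat K) (t : ℕ) : (spow a t).1 = min ((t + 1) * a.1) K := by
  induction t with
  | zero => change a.1 = min (1 * a.1) K; have := a.2; omega
  | succ t ih =>
    change (a * spow a t).1 = _
    rw [val_mul, ih, show (t + 1 + 1) * a.1 = a.1 + (t + 1) * a.1 by ring]
    omega

theorem models_Cvar (K : ℕ) : Models (TruncNat K) (Cvar K).th := by
  cases K with
  | zero => exact fun e _ σ => Subtype.ext (by have := (lift σ e.1).2; have := (lift σ e.2).2; omega)
  | succ K =>
    refine models_varOf ?_
    rintro _ (rfl | rfl) σ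
    · exact mul_comm _ _
    · refine Subtype.ext ?_
      change (lift σ (spow xw K)).1 = (lift σ (spow xw (K + 1))).1
      rw [map_spow, map_spow, val_spow, val_spow]
      rcases Nat.eq_zero_or_pos (lift σ xw).1 with h | h
      · simp [h]
      · have := Nat.le_mul_of_pos_right (K + 1) h
        have := Nat.le_mul_of_pos_right (K + 1 + 1) h
        omega

theorem val_iterate_mul_left (a t : TruncNat K) (i : ℕ) :
    ((a * ·)^[i] t).1 = min (i * a.1 + t.1) K := by
  induction i with
  | zero => have := t.2; simp [this]
  | succ i ih =>
    rw [Function.iterate_succ_apply', val_mul, ih, add_one_mul]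
    omega

theorem not_satS_xyPowId {m j n : ℕ} (hj : 0 < j) (hmK : m < K) :
    ¬ SatS (TruncNat K) (xyPowId m j n) := by
  let one : TruncNat K := ⟨1, Nat.one_le_of_lt hmK⟩
  let zero : TruncNat K := ⟨0, K.zero_le⟩
  have hzero : (spow zero n).1 = 0 := by rw [val_spow]; simp [zero]
  intro h
  have := congrArg Subtype.val (satS_xyPowId_iff.1 h one zero)
  rw [val_iterate_mul_left, val_iterate_mul_left, hzero] at this
  simp only [one, mul_one, add_zero] at this
  omega

end TruncNat

/-- If `G` is a periodic group variety, `m ≥ 0` and `N` is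
a nil-variety, then `m(G ∨ C_m ∨ N) = m`, i.e. `m` is the greatest `k` with
`C_k ⊆ G ∨ C_m ∨ N`. -/
theorem m_of_G_Cm_N (G N : SgVariety) (hG : IsGroupVariety G)
    (hGper : IsPeriodic G) (hN : IsNilVariety N) (m : ℕ) :
    IsGreatest {k : ℕ | Cvar k ≤ G ⊔ Cvar m ⊔ N} m := by
  obtain ⟨p, k, hper⟩ := hGper
  obtain ⟨n, hzero⟩ := hN.exists_mul_spow_mem_th
  refine ⟨show Cvar m ≤ _ from le_sup_right.trans le_sup_left, fun K hK => ?_⟩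
  by_contra! hmK
  have hmem : xyPowId m (k + 1) n ∈ (G ⊔ Cvar m ⊔ N).th :=
    ⟨⟨xyPowId_mem_th_of_isGroupVariety hG hper m n, xyPowId_mem_th_Cvar m (k + 1) n⟩,
      xyPowId_mem_th_of_mul_spow_mem_th hzero m (k + 1)⟩
  exact TruncNat.not_satS_xyPowId k.succ_pos hmK
    ((Cvar K).mem_th_iff.1 (hK hmem) _ (TruncNat.models_Cvar K))
end

section
/- If X and Y are periodic commutative semigroup varieties, then m(X ∨ Y) = max{m(X), m(Y)}. -/
/-!
Formalization framework: semigroup varieties as Galois-closed equational theories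
over the free semigroup on countably many letters.  A variety is represented by
its equational theory; the order `V ≤ W` ("V is a subvariety of W") is reverse
inclusion of theories.  `Com` is the lattice of commutative semigroup varieties,
realized as the subtype of varieties whose theory contains the commutative law.
-/

open FreeSemigroup

section AuxM

/-- Exponent vector (abelianization) of a word. -/
private noncomputable def vecW (w : Word) : ℕ →₀ ℕ :=
  Multiplicative.toAdd
    ((FreeSemigroup.lift (fun i => Multiplicative.ofAdd (Finsupp.single i (1:ℕ)))) w)

private lemma vecW_of (i : ℕ) : vecW (FreeSemigroup.of i) = Finsupp.single i 1 := by
  simp [vecW]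

private lemma vecW_mul (u v : Word) : vecW (u * v) = vecW u + vecW v := by
  simp [vecW, map_mul]

private lemma lift_spow {S : Type*} [Semigroup S] (σ : ℕ → S) (w : Word) (k : ℕ) :
    FreeSemigroup.lift σ (spow w k) = spow (FreeSemigroup.lift σ w) k := by
  induction k with
  | zero => rfl
  | succ k ih =>
      show FreeSemigroup.lift σ (w * spow w k) = _
      rw [map_mul, ih]; rfl

private lemma coe_spow {S : Type*} [Semigroup S] (a : S) (k : ℕ) :
    ((spow a k : S) : WithOne S) = (a : WithOne S) ^ (k + 1) := by
  induction k with
  | zero => simp [spow]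
  | succ k ih =>
      show ((a * spow a k : S) : WithOne S) = _
      rw [WithOne.coe_mul, ih, ← pow_succ']

private lemma pow_step {M : Type*} [Monoid M] {z : M} {n q : ℕ} (h : z ^ n = z ^ (n + q)) :
    ∀ s, n ≤ s → z ^ (s + q) = z ^ s := by
  intro s hs
  obtain ⟨r, rfl⟩ := Nat.exists_eq_add_of_le hs
  rw [show n + r + q = (n + q) + r by ring, pow_add, ← h, ← pow_add]

private lemma pow_stab {M : Type*} [Monoid M] {z : M} {n q : ℕ} (h : z ^ n = z ^ (n + q)) :
    ∀ s, n ≤ s → ∀ j, z ^ (s + q * j) = z ^ s := by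
  intro s hs j
  induction j with
  | zero => simp
  | succ j ih =>
      rw [show s + q * (j+1) = (s + q * j) + q by ring, pow_step h _ (by omega), ih]

private lemma eval_lift {S : Type} [CommSemigroup S] (σ : ℕ → S) (w : Word) :
    ((FreeSemigroup.lift σ w : S) : WithOne S)
      = (vecW w).prod (fun i k => ((σ i : WithOne S)) ^ k) := by
  induction w using FreeSemigroup.recOnMul with
  | ih1 i =>
      rw [FreeSemigroup.lift_of, vecW_of, Finsupp.prod_single_index, pow_one]
      exact pow_zero _
  | ih2 u v ihu ihv =>
      rw [map_mul, WithOne.coe_mul, ihu, ihv, vecW_mul,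
        Finsupp.prod_add_index' (fun _ => pow_zero _) (fun _ _ _ => pow_add _ _ _)]

private lemma comm_of_sat {S : Type} [Semigroup S] (h : SatS S commId) :
    ∀ a b : S, a * b = b * a := by
  intro a b
  have h2 := h (fun t => if t = 0 then a else b)
  simpa [commId, xw, yw, map_mul, FreeSemigroup.lift_of] using h2

end AuxM
section AuxK

private lemma key_rel {S : Type} [Semigroup S] (hc : ∀ a b : S, a * b = b * a)
    (u v : Word) (hsat : SatS S (u, v))
    (n q : ℕ) (hn : 1 ≤ n) (hq : 1 ≤ q)
    (hper : ∀ c : S, (c : WithOne S) ^ n = (c : WithOne S) ^ (n + q))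
    (i : ℕ) (g h : S) (s : ℕ) (hs : n ≤ s) :
    (g : WithOne S) ^ (vecW u i) * (h : WithOne S) ^ s
      = (g : WithOne S) ^ (vecW v i) * (h : WithOne S) ^ s := by
  letI : CommSemigroup S := { ‹Semigroup S› with mul_comm := hc }
  set K := q * n with hK
  set σ : ℕ → S := fun j => if j = i then g else spow h (K - 1) with hσ
  have h1 := congrArg (fun x : S => (x : WithOne S)) (hsat σ)
  simp only [] at h1
  rw [eval_lift, eval_lift] at h1
  have split : ∀ w : ℕ →₀ ℕ,
      w.prod (fun j k => ((σ j : WithOne S)) ^ k)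
        = (g : WithOne S) ^ (w i)
            * ((h : WithOne S) ^ K) ^ ((Finsupp.erase i w).sum fun _ t => t) := by
    intro w
    conv_lhs => rw [← Finsupp.erase_add_single i w]
    rw [Finsupp.prod_add_index' (fun _ => pow_zero _) (fun _ _ _ => pow_add _ _ _)]
    rw [Finsupp.prod_single_index]
    swap
    · exact pow_zero _
    have herase : (Finsupp.erase i w).prod (fun j k => ((σ j : WithOne S)) ^ k)
        = ((h : WithOne S) ^ K) ^ ((Finsupp.erase i w).sum fun _ t => t) := by
      rw [Finsupp.prod, Finsupp.sum, ← Finset.prod_pow_eq_pow_sum]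
      apply Finset.prod_congr rfl
      intro j hj
      have hji : j ≠ i := by
        rw [Finsupp.support_erase] at hj
        exact (Finset.mem_erase.mp hj).1
      rw [hσ]
      simp only [if_neg hji]
      rw [coe_spow]
      have hK1 : 1 ≤ K := by rw [hK]; exact Nat.mul_pos hq hn
      rw [show K - 1 + 1 = K by omega]
    rw [herase]
    have hσi : σ i = g := by rw [hσ]; simp
    rw [hσi, mul_comm]
  rw [split, split] at h1
  have h2 := congrArg (fun x => x * (h : WithOne S) ^ s) h1
  have absorb : ∀ R : ℕ,
      ((h : WithOne S) ^ K) ^ R * (h : WithOne S) ^ s = (h : WithOne S) ^ s := by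
    intro R
    rw [← pow_mul, ← pow_add, show K * R + s = s + q * (n * R) by rw [hK]; ring]
    exact pow_stab (hper h) s hs (n * R)
  rw [mul_assoc, mul_assoc, absorb, absorb] at h2
  exact h2

private lemma variety_base {S : Type} [Semigroup S] (hc : ∀ a b : S, a * b = b * a)
    (u v : Word) (hsat : SatS S (u, v))
    (n q : ℕ) (hn : 1 ≤ n) (hq : 1 ≤ q)
    (hper : ∀ c : S, (c : WithOne S) ^ n = (c : WithOne S) ^ (n + q))
    (i : ℕ) (g h : S) (s : ℕ) (hs : n ≤ s) :
    (g : WithOne S) ^ (min (vecW u i) (vecW v i)) * (h : WithOne S) ^ s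
      = (g : WithOne S) ^ (min (vecW u i) (vecW v i)
          + (max (vecW u i) (vecW v i) - min (vecW u i) (vecW v i))) * (h : WithOne S) ^ s := by
  rcases le_total (vecW u i) (vecW v i) with hle | hle
  · rw [max_eq_right hle, min_eq_left hle,
      show vecW u i + (vecW v i - vecW u i) = vecW v i by omega]
    exact key_rel hc u v hsat n q hn hq hper i g h s hs
  · rw [max_eq_left hle, min_eq_right hle,
      show vecW v i + (vecW u i - vecW v i) = vecW u i by omega]
    exact (key_rel hc u v hsat n q hn hq hper i g h s hs).symm

private lemma raise {M : Type*} [CommMonoid M] (c z : M) {α d s : ℕ}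
    (base : c ^ α * z ^ s = c ^ (α + d) * z ^ s) :
    ∀ t j, c ^ (α + t) * z ^ s = c ^ (α + t + d * j) * z ^ s := by
  have step : ∀ t, c ^ (α + t) * z ^ s = c ^ (α + t + d) * z ^ s := by
    intro t
    have h1 := congrArg (fun x => c ^ t * x) base
    rw [← mul_assoc, ← mul_assoc, ← pow_add, ← pow_add,
      show t + α = α + t by ring, show t + (α + d) = α + t + d by ring] at h1
    exact h1
  intro t j
  induction j with
  | zero => simp
  | succ j ih =>
      rw [ih, show α + t + d * (j+1) = α + (t + d * j) + d by ring,
        show α + t + d * j = α + (t + d * j) by ring]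
      exact step _

private lemma extract (m : ℕ) (u v : Word)
    (hno : (u, v) ∉ eqTh {commId, (spow xw m, spow xw (m + 1))}) :
    ∃ i, vecW u i ≠ vecW v i ∧ min (vecW u i) (vecW v i) ≤ m := by
  by_contra hcon
  push_neg at hcon
  apply hno
  intro S _ hM
  have hc : ∀ a b : S, a * b = b * a := comm_of_sat (hM commId (Set.mem_insert _ _))
  letI : CommSemigroup S := { ‹Semigroup S› with mul_comm := hc }
  have hpid := hM _ (Set.mem_insert_of_mem _ rfl)
  have hpow : ∀ c : S, (c : WithOne S) ^ (m+1) = (c : WithOne S) ^ ((m+1) + 1) := by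
    intro c
    have h1 := hpid (fun _ => c)
    rw [lift_spow, lift_spow] at h1
    rw [show (FreeSemigroup.lift (fun _ : ℕ => c)) xw = c by simp [xw]] at h1
    have h2 := congrArg (fun x : S => (x : WithOne S)) h1
    rw [coe_spow, coe_spow] at h2
    exact h2
  have hs : ∀ (c : S) (e : ℕ), m + 1 ≤ e →
      (c : WithOne S) ^ e = (c : WithOne S) ^ (m+1) := by
    intro c e he
    have h3 := pow_stab (hpow c) (m+1) le_rfl (e - (m+1))
    rw [show (m+1) + 1 * (e - (m+1)) = e by omega] at h3
    exact h3
  intro σ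
  apply WithOne.coe_inj.mp
  rw [eval_lift, eval_lift]
  have hsupp : (vecW u).support = (vecW v).support := by
    ext j
    simp only [Finsupp.mem_support_iff]
    rcases eq_or_ne (vecW u j) (vecW v j) with hEq | hNe
    · rw [hEq]
    · have := hcon j hNe; omega
  rw [Finsupp.prod, Finsupp.prod, hsupp]
  apply Finset.prod_congr rfl
  intro j _
  rcases eq_or_ne (vecW u j) (vecW v j) with hEq | hNe
  · rw [hEq]
  · have hmin := hcon j hNe
    rw [hs (σ j) _ (by omega : m + 1 ≤ vecW u j), hs (σ j) _ (by omega : m + 1 ≤ vecW v j)]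

end AuxK
section AuxT

private def mpw : ℕ → Word → Word
  | 0, w => w
  | n+1, w => xw * mpw n w

private lemma vecW_mpw (n : ℕ) (w : Word) :
    vecW (mpw n w) = Finsupp.single 0 n + vecW w := by
  induction n with
  | zero => simp [mpw]
  | succ n ih =>
      show vecW (xw * mpw n w) = _
      rw [vecW_mul, ih, show vecW xw = Finsupp.single 0 1 by rw [xw]; exact vecW_of 0,
        ← add_assoc, ← Finsupp.single_add]
      congr 2
      omega

private lemma vecW_spow_y (k : ℕ) : vecW (spow yw k) = Finsupp.single 1 (k + 1) := by
  induction k with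
  | zero => show vecW yw = _; rw [yw]; exact vecW_of 1
  | succ k ih =>
      show vecW (yw * spow yw k) = _
      rw [vecW_mul, ih, show vecW yw = Finsupp.single 1 1 by rw [yw]; exact vecW_of 1,
        ← Finsupp.single_add]
      congr 1
      omega

private def spm {S : Type*} [Semigroup S] (g : S) : ℕ → S → S
  | 0, h => h
  | n+1, h => g * spm g n h

private lemma lift_mpw {S : Type*} [Semigroup S] (σ : ℕ → S) (n : ℕ) (w : Word) :
    FreeSemigroup.lift σ (mpw n w) = spm (σ 0) n (FreeSemigroup.lift σ w) := by
  induction n with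
  | zero => rfl
  | succ n ih =>
      show FreeSemigroup.lift σ (xw * mpw n w) = _
      rw [map_mul, ih, show (FreeSemigroup.lift σ) xw = σ 0 by simp [xw]]
      rfl

private structure TrS (t : ℕ) where
  val : ℕ
  hle : val ≤ t

private lemma TrS.ext' {t : ℕ} {a b : TrS t} (h : a.val = b.val) : a = b := by
  cases a; cases b; cases h; rfl

private instance (t : ℕ) : Semigroup (TrS t) where
  mul a b := ⟨min (a.val + b.val) t, min_le_right _ _⟩
  mul_assoc a b c := TrS.ext'
    (by show min (min (a.val + b.val) t + c.val) t = min (a.val + min (b.val + c.val) t) t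
        omega)

private lemma TrS.mul_val {t : ℕ} (a b : TrS t) : (a * b).val = min (a.val + b.val) t := rfl

private lemma TrS.spow_val {t : ℕ} (a : TrS t) (j : ℕ) :
    (spow a j).val = min ((j + 1) * a.val) t := by
  induction j with
  | zero =>
      show a.val = min (1 * a.val) t
      rw [one_mul]
      have := a.hle
      omega
  | succ j ih =>
      show min (a.val + (spow a j).val) t = min ((j + 1 + 1) * a.val) t
      rw [ih, show (j + 1 + 1) * a.val = a.val + (j + 1) * a.val by ring]
      generalize (j + 1) * a.val = X
      omega

private lemma TrS_models (M : ℕ) :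
    Models (TrS (M + 1)) {commId, (spow xw M, spow xw (M + 1))} := by
  intro e he
  rcases he with rfl | he
  · intro σ
    show FreeSemigroup.lift σ (xw * yw) = FreeSemigroup.lift σ (yw * xw)
    rw [map_mul, map_mul]
    exact TrS.ext' (by rw [TrS.mul_val, TrS.mul_val]; omega)
  · rcases Set.mem_singleton_iff.mp he with rfl
    intro σ
    show FreeSemigroup.lift σ (spow xw M) = FreeSemigroup.lift σ (spow xw (M + 1))
    rw [lift_spow, lift_spow]
    apply TrS.ext'
    rw [TrS.spow_val, TrS.spow_val]
    set c := FreeSemigroup.lift σ xw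
    rcases Nat.eq_zero_or_pos c.val with h0 | h1
    · rw [h0]; simp
    · have e1 : M + 1 ≤ (M + 1) * c.val := Nat.le_mul_of_pos_right _ h1
      have e2 : M + 1 ≤ (M + 1 + 1) * c.val := le_trans (by omega) (Nat.le_mul_of_pos_right _ h1)
      rw [min_eq_right e1, min_eq_right e2]

private lemma gamma_not (M δ s : ℕ) (hδ : 1 ≤ δ) (hs : 1 ≤ s) :
    (mpw M (spow yw (s - 1)), mpw (M + δ) (spow yw (s - 1))) ∉
      eqTh {commId, (spow xw M, spow xw (M + 1))} := by
  intro hmem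
  set z : TrS (M + 1) := ⟨0, by omega⟩ with hz
  set o : TrS (M + 1) := ⟨1, by omega⟩ with ho
  set σ : ℕ → TrS (M + 1) := fun j => if j = 0 then o else z with hσ
  have h1 := hmem (TrS (M + 1)) (TrS_models M) σ
  simp only [] at h1
  rw [lift_mpw, lift_mpw, lift_spow] at h1
  have hzv : z.val = 0 := rfl
  have hov : o.val = 1 := rfl
  have hσ0 : σ 0 = o := by simp [hσ]
  have hσ1 : σ 1 = z := by simp [hσ]
  have hyz : FreeSemigroup.lift σ yw = z := by
    rw [show (FreeSemigroup.lift σ) yw = σ 1 by simp [yw], hσ1]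
  have hspz : ∀ r, spow z r = z := by
    intro r
    induction r with
    | zero => rfl
    | succ r ih =>
        show z * spow z r = z
        rw [ih]
        exact TrS.ext' (by rw [TrS.mul_val, hzv]; omega)
  have hspm : ∀ j, (spm o j z).val = min j (M + 1) := by
    intro j
    induction j with
    | zero => simp [spm, hzv]
    | succ j ih =>
        show (o * spm o j z).val = _
        rw [TrS.mul_val, ih, hov]
        omega
  rw [hyz, hσ0, hspz] at h1
  have h2 := congrArg TrS.val h1
  rw [hspm, hspm] at h2
  omega

private lemma Cvar_mono {j k : ℕ} (h : j ≤ k) : Cvar j ≤ Cvar k := by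
  cases j with
  | zero =>
      show (Cvar k).th ⊆ (Cvar 0).th
      intro e _
      show e ∈ eqTh Set.univ
      intro S _ hM
      have hsub : ∀ x y : S, x = y := by
        intro x y
        have h1 := hM (xw, yw) trivial (fun t => if t = 0 then x else y)
        simpa [xw, yw] using h1
      intro σ
      exact hsub _ _
  | succ j =>
      cases k with
      | zero => omega
      | succ k =>
          show (Cvar (k + 1)).th ⊆ (Cvar (j + 1)).th
          intro e he S _ hM
          apply he
          intro e' he'
          rcases he' with rfl | he'
          · exact hM commId (Set.mem_insert _ _)
          · rcases Set.mem_singleton_iff.mp he' with rfl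
            have hpid := hM _ (Set.mem_insert_of_mem _ rfl)
            intro σ
            rw [lift_spow, lift_spow]
            set c := FreeSemigroup.lift σ xw
            apply WithOne.coe_inj.mp
            rw [coe_spow, coe_spow]
            have hbase : (c : WithOne S) ^ (j + 1) = (c : WithOne S) ^ ((j + 1) + 1) := by
              have h1 := hpid (fun _ => c)
              rw [lift_spow, lift_spow,
                show (FreeSemigroup.lift (fun _ : ℕ => c)) xw = c by simp [xw]] at h1
              have h2 := congrArg (fun x : S => (x : WithOne S)) h1
              rw [coe_spow, coe_spow] at h2
              exact h2
            have := pow_step hbase (k + 1) (by omega)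
            rw [this]

end AuxT
private lemma prod_pair {S : Type} [CommSemigroup S] (σ : ℕ → S) (Mv s : ℕ) :
    (Finsupp.single 0 Mv + Finsupp.single 1 s).prod (fun i k => ((σ i : WithOne S)) ^ k)
      = ((σ 0 : WithOne S)) ^ Mv * ((σ 1 : WithOne S)) ^ s := by
  rw [Finsupp.prod_add_index' (fun _ => pow_zero _) (fun _ _ _ => pow_add _ _ _),
    Finsupp.prod_single_index, Finsupp.prod_single_index]
  · exact pow_zero _
  · exact pow_zero _
/-- If `X`, `Y` are periodic commutative semigroup
varieties, then `m(X ∨ Y) = max{m(X), m(Y)}`. -/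
theorem m_of_join (X Y : ComVariety) (hX : IsPeriodic X.1) (hY : IsPeriodic Y.1)
    (a b : ℕ) (ha : IsGreatest {k : ℕ | Cvar k ≤ X.1} a)
    (hb : IsGreatest {k : ℕ | Cvar k ≤ Y.1} b) :
    IsGreatest {k : ℕ | Cvar k ≤ X.1 ⊔ Y.1} (max a b) := by
  constructor
  · show Cvar (max a b) ≤ X.1 ⊔ Y.1
    rcases le_total a b with hab | hab
    · rw [max_eq_right hab]
      exact le_trans hb.1 le_sup_right
    · rw [max_eq_left hab]
      exact le_trans ha.1 le_sup_left
  · intro k hk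
    by_contra hgt
    push_neg at hgt
    set M := max a b with hM
    have hMk : M + 1 ≤ k := by omega
    have hC : Cvar (M + 1) ≤ X.1 ⊔ Y.1 := le_trans (Cvar_mono hMk) hk
    have hsub : (X.1 ⊔ Y.1).th ⊆ (Cvar (M + 1)).th := hC
    -- extract failing identities
    have hXa : ¬ Cvar (a + 1) ≤ X.1 := fun hcon => by have := ha.2 hcon; omega
    have hYb : ¬ Cvar (b + 1) ≤ Y.1 := fun hcon => by have := hb.2 hcon; omega
    have hXa' : ¬ (X.1.th ⊆ (Cvar (a + 1)).th) := hXa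
    have hYb' : ¬ (Y.1.th ⊆ (Cvar (b + 1)).th) := hYb
    obtain ⟨⟨uX, vX⟩, hmemX, hnoX⟩ := Set.not_subset.mp hXa'
    obtain ⟨⟨uY, vY⟩, hmemY, hnoY⟩ := Set.not_subset.mp hYb'
    obtain ⟨iX, hneX, hminX⟩ := extract a uX vX hnoX
    obtain ⟨iY, hneY, hminY⟩ := extract b uY vY hnoY
    obtain ⟨n0X, k0X, hperX⟩ := hX
    obtain ⟨n0Y, k0Y, hperY⟩ := hY
    set nX := n0X + 1 with hnX
    set qX := k0X + 1 with hqX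
    set nY := n0Y + 1 with hnY
    set qY := k0Y + 1 with hqY
    set s := max nX nY with hs
    set αX := min (vecW uX iX) (vecW vX iX) with hαX
    set dX := max (vecW uX iX) (vecW vX iX) - min (vecW uX iX) (vecW vX iX) with hdX
    set αY := min (vecW uY iY) (vecW vY iY) with hαY
    set dY := max (vecW uY iY) (vecW vY iY) - min (vecW uY iY) (vecW vY iY) with hdY
    have hdX1 : 1 ≤ dX := by rw [hdX]; omega
    have hdY1 : 1 ≤ dY := by rw [hdY]; omega
    have hγ_not : (mpw M (spow yw (s - 1)), mpw (M + dX * dY) (spow yw (s - 1)))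
        ∉ (Cvar (M + 1)).th :=
      gamma_not M (dX * dY) s (Nat.mul_pos hdX1 hdY1) (by omega)
    have hγX : (mpw M (spow yw (s - 1)), mpw (M + dX * dY) (spow yw (s - 1))) ∈ X.1.th := by
      rw [← X.1.closed]
      intro S _ hMod
      have hc : ∀ x y : S, x * y = y * x := comm_of_sat (hMod commId X.2)
      letI : CommSemigroup S := { ‹Semigroup S› with mul_comm := hc }
      have hperS : ∀ c : S, (c : WithOne S) ^ nX = (c : WithOne S) ^ (nX + qX) := by
        intro c
        have h1 := hMod _ hperX (fun _ => c)
        rw [lift_spow, lift_spow,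
          show (FreeSemigroup.lift (fun _ : ℕ => c)) xw = c by simp [xw]] at h1
        have h2 := congrArg (fun x : S => (x : WithOne S)) h1
        rw [coe_spow, coe_spow] at h2
        rw [show n0X + k0X + 1 + 1 = nX + qX by omega] at h2
        exact h2
      have hsatX : SatS S (uX, vX) := hMod _ hmemX
      intro σ
      apply WithOne.coe_inj.mp
      show ((FreeSemigroup.lift σ (mpw M (spow yw (s - 1))) : S) : WithOne S) = _
      rw [eval_lift, eval_lift, vecW_mpw, vecW_mpw, vecW_spow_y,
        show s - 1 + 1 = s by omega, prod_pair, prod_pair]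
      have hbase := variety_base hc uX vX hsatX nX qX (by omega) (by omega) hperS iX
        (σ 0) (σ 1) s (le_max_left _ _)
      rw [← hαX, ← hdX] at hbase
      have hraise := raise ((σ 0 : WithOne S)) ((σ 1 : WithOne S)) hbase (M - αX) dY
      rw [show αX + (M - αX) = M by omega] at hraise
      exact hraise
    have hγY : (mpw M (spow yw (s - 1)), mpw (M + dX * dY) (spow yw (s - 1))) ∈ Y.1.th := by
      rw [← Y.1.closed]
      intro S _ hMod
      have hc : ∀ x y : S, x * y = y * x := comm_of_sat (hMod commId Y.2)
      letI : CommSemigroup S := { ‹Semigroup S› with mul_comm := hc }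
      have hperS : ∀ c : S, (c : WithOne S) ^ nY = (c : WithOne S) ^ (nY + qY) := by
        intro c
        have h1 := hMod _ hperY (fun _ => c)
        rw [lift_spow, lift_spow,
          show (FreeSemigroup.lift (fun _ : ℕ => c)) xw = c by simp [xw]] at h1
        have h2 := congrArg (fun x : S => (x : WithOne S)) h1
        rw [coe_spow, coe_spow] at h2
        rw [show n0Y + k0Y + 1 + 1 = nY + qY by omega] at h2
        exact h2
      have hsatY : SatS S (uY, vY) := hMod _ hmemY
      intro σ
      apply WithOne.coe_inj.mp
      show ((FreeSemigroup.lift σ (mpw M (spow yw (s - 1))) : S) : WithOne S) = _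
      rw [eval_lift, eval_lift, vecW_mpw, vecW_mpw, vecW_spow_y,
        show s - 1 + 1 = s by omega, prod_pair, prod_pair]
      have hbase := variety_base hc uY vY hsatY nY qY (by omega) (by omega) hperS iY
        (σ 0) (σ 1) s (le_max_right _ _)
      rw [← hαY, ← hdY] at hbase
      have hraise := raise ((σ 0 : WithOne S)) ((σ 1 : WithOne S)) hbase (M - αY) dX
      rw [show αY + (M - αY) = M by omega, Nat.mul_comm dY dX] at hraise
      exact hraise
    exact hγ_not (hsub ⟨hγX, hγY⟩)
end
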